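/- arXiv:1907.09383 — 5 statements merged into one kernel-verified Lean document; each statement's English description precedes it below -/
import Mathlib

section
/- Let n ≥ 1 and Ξ = T_{V₊} ∩ S^n_ℂ. Then the set of values of the bilinear form on Ξ is exactly ℂ minus the real ray (−∞,−1]: {z·w : z, w ∈ Ξ} = ℂ \ {t ∈ ℝ : t ≤ −1}. (Paper: Lemma 3.4, lem:xi-values.) -/
open MeasureTheory

noncomputable section

/-- Standard complex bilinear form on ℂ^{n+1}. -/
def dotC (n : ℕ) (z w : Fin (n+1) → ℂ) : ℂ := ∑ j, z j * w j

/-- The real form V = ℝe₀ ⊕ iℝⁿ. -/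
def memV (n : ℕ) (z : Fin (n+1) → ℂ) : Prop :=
  (z 0).im = 0 ∧ ∀ j, j ≠ 0 → (z j).re = 0

/-- The open forward light cone V₊ ⊆ V. -/
def memVplus (n : ℕ) (z : Fin (n+1) → ℂ) : Prop :=
  memV n z ∧ 0 < (z 0).re ∧ 0 < (dotC n z z).re

/-- The tube domain T_{V₊} = V₊ + iV. -/
def memTV (n : ℕ) (z : Fin (n+1) → ℂ) : Prop :=
  ∃ x y, memVplus n x ∧ memV n y ∧ z = x + Complex.I • y

/-- The crown Ξ = T_{V₊} ∩ S^n_ℂ. -/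
def memXi (n : ℕ) (z : Fin (n+1) → ℂ) : Prop :=
  memTV n z ∧ dotC n z z = 1

/-- The forward light rays L^n₊. -/
def memLn (n : ℕ) (v : Fin (n+1) → ℂ) : Prop :=
  memV n v ∧ dotC n v v = 0 ∧ 0 < (v 0).re

/-- The hyperboloid H^n_V ⊆ V. -/
def memHn (n : ℕ) (u : Fin (n+1) → ℂ) : Prop :=
  memV n u ∧ 0 < (u 0).re ∧ dotC n u u = 1

/-- The conjugation σ_V fixing V pointwise. -/
def sigmaV (n : ℕ) (z : Fin (n+1) → ℂ) : Fin (n+1) → ℂ :=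
  fun j => if j = 0 then (starRingEnd ℂ) (z j) else -((starRingEnd ℂ) (z j))

/-- The conjugation σ_E fixing ℝ^{n+1} pointwise. -/
def sigmaE (n : ℕ) (z : Fin (n+1) → ℂ) : Fin (n+1) → ℂ := fun j => (starRingEnd ℂ) (z j)

/-- Standard basis vectors of ℂ^{n+1}. -/
def stdC (n : ℕ) (k : Fin (n+1)) : Fin (n+1) → ℂ := fun j => if j = k then 1 else 0

/-- The group G^c ≅ O(1,n)(ℝ)^↑, realized as complex-linear maps preserving the
bilinear form, preserving V, and positively oriented in time. -/
def isGc (n : ℕ) (g : (Fin (n+1) → ℂ) →ₗ[ℂ] (Fin (n+1) → ℂ)) : Prop :=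
  Function.Bijective g ∧ (∀ z w, dotC n (g z) (g w) = dotC n z w) ∧
  (∀ z, memV n z → memV n (g z)) ∧ 0 < ((g (stdC n 0)) 0).re

/-- ξ_u = e₀ + iu for u ∈ ℝⁿ. -/
def xiC (n : ℕ) (u : Fin n → ℝ) : Fin (n+1) → ℂ :=
  Fin.cons 1 (fun j => Complex.I * (u j : ℂ))

/-- The unit sphere S^{n-1} ⊆ ℝⁿ. -/
def unitSph (n : ℕ) (u : Fin n → ℝ) : Prop := ∑ j, u j ^ 2 = 1

/-- The action of G^c on the sphere S^{n-1}, defined via g ξ_u = j(g,u) ξ_{g.u}. -/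
def gact (n : ℕ) (g : (Fin (n+1) → ℂ) →ₗ[ℂ] (Fin (n+1) → ℂ)) (u : Fin n → ℝ) : Fin n → ℝ :=
  fun j => ((g (xiC n u)) j.succ).im / ((g (xiC n u)) 0).re

/-- μ is the rotation-invariant Borel probability measure on S^{n-1} ⊆ ℝⁿ. -/
def IsSphereMeasure (n : ℕ) (μ : Measure (Fin n → ℝ)) : Prop :=
  IsProbabilityMeasure μ ∧ μ {u | unitSph n u}ᶜ = 0 ∧
  ∀ g : Matrix.orthogonalGroup (Fin n) ℝ,
    μ.map (fun u => (g : Matrix (Fin n) (Fin n) ℝ).mulVec u) = μ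

/-- ρ = (n-1)/2 as a complex number. -/
def rhoC (n : ℕ) : ℂ := ((n : ℂ) - 1) / 2

/-- λ_m = √(ρ²−m²) for m ≤ ρ and i√(m²−ρ²) for m ≥ ρ. -/
def lamOf (n : ℕ) (m : ℝ) : ℂ :=
  if m ≤ ((n : ℝ) - 1) / 2 then (Real.sqrt ((((n : ℝ) - 1) / 2) ^ 2 - m ^ 2) : ℂ)
  else Complex.I * (Real.sqrt (m ^ 2 - (((n : ℝ) - 1) / 2) ^ 2) : ℂ)


-- ===== auxiliary lemmas for stmt_2 =====

lemma sum_sq_eq' {n : ℕ} (f : Fin n → ℝ) : ∑ j, f j * f j = ∑ j, f j ^ 2 :=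
  Finset.sum_congr rfl fun j _ => (sq (f j)).symm

lemma myV_add {n : ℕ} {u v : Fin (n+1) → ℂ} (hu : memV n u) (hv : memV n v) :
    memV n (u + v) := by
  refine ⟨by simp [hu.1, hv.1], fun j hj => by simp [hu.2 j hj, hv.2 j hj]⟩

lemma mydot_im {n : ℕ} {u v : Fin (n+1) → ℂ} (hu : memV n u) (hv : memV n v) :
    (dotC n u v).im = 0 := by
  rw [dotC, Complex.im_sum]
  refine Finset.sum_eq_zero fun j _ => ?_
  by_cases hj : j = 0
  · subst hj; simp [Complex.mul_im, hu.1, hv.1]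
  · simp [Complex.mul_im, hu.2 j hj, hv.2 j hj]

lemma mydot_re {n : ℕ} {u v : Fin (n+1) → ℂ} (hu : memV n u) (hv : memV n v) :
    (dotC n u v).re
      = (u 0).re * (v 0).re - ∑ j : Fin n, (u j.succ).im * (v j.succ).im := by
  rw [dotC, Complex.re_sum, Fin.sum_univ_succ]
  have h0 : (u 0 * v 0).re = (u 0).re * (v 0).re := by simp [Complex.mul_re, hu.1]
  have hs : ∀ j : Fin n, (u j.succ * v j.succ).re = -((u j.succ).im * (v j.succ).im) :=
    fun j => by simp [Complex.mul_re, hu.2 _ (Fin.succ_ne_zero j), hv.2 _ (Fin.succ_ne_zero j)]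
  rw [h0, Finset.sum_congr rfl fun j _ => hs j, Finset.sum_neg_distrib, ← sub_eq_add_neg]

lemma key_spacelike {n : ℕ} {u v : Fin (n+1) → ℂ} (hu : memVplus n u) (hv : memV n v)
    (h : (dotC n u v).re = 0) : (dotC n v v).re ≤ 0 := by
  have huv := mydot_re hu.1 hv
  have huu := mydot_re hu.1 hu.1
  have hvv := mydot_re hv hv
  rw [sum_sq_eq'] at hvv huu
  rw [h] at huv
  have huu' := hu.2.2; rw [huu] at huu'
  rw [hvv]
  have cs := Finset.sum_mul_sq_le_sq_mul_sq Finset.univ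
    (fun j : Fin n => (u j.succ).im) (fun j : Fin n => (v j.succ).im)
  have hdnn : (0:ℝ) ≤ ∑ j : Fin n, ((v j.succ).im) ^ 2 :=
    Finset.sum_nonneg fun j _ => sq_nonneg _
  have hQnn : (0:ℝ) ≤ ∑ j : Fin n, ((u j.succ).im) ^ 2 :=
    Finset.sum_nonneg fun j _ => sq_nonneg _
  have hPpos : 0 < (u 0).re := hu.2.1
  have hT : ∑ j : Fin n, (u j.succ).im * (v j.succ).im = (u 0).re * (v 0).re := by
    linarith
  have h1 : ((u 0).re * (v 0).re) ^ 2
      ≤ (∑ j : Fin n, ((u j.succ).im) ^ 2) * ∑ j : Fin n, ((v j.succ).im) ^ 2 := by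
    rw [← hT]; exact cs
  have h2 : (∑ j : Fin n, ((u j.succ).im) ^ 2) * (∑ j : Fin n, ((v j.succ).im) ^ 2)
      ≤ (u 0).re ^ 2 * ∑ j : Fin n, ((v j.succ).im) ^ 2 := by
    apply mul_le_mul_of_nonneg_right _ hdnn
    nlinarith
  nlinarith [h1, h2, mul_pos hPpos hPpos]

lemma key_cone_add {n : ℕ} {u v : Fin (n+1) → ℂ} (hu : memVplus n u) (hv : memVplus n v) :
    memVplus n (u + v) := by
  have hV := myV_add hu.1 hv.1
  refine ⟨hV, ?_, ?_⟩
  · have := hu.2.1; have := hv.2.1; simp only [Pi.add_apply, Complex.add_re]; linarith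
  · rw [mydot_re hV hV]
    have huu := hu.2.2; rw [mydot_re hu.1 hu.1, sum_sq_eq'] at huu
    have hvv := hv.2.2; rw [mydot_re hv.1 hv.1, sum_sq_eq'] at hvv
    have hadd0 : ((u + v) 0).re = (u 0).re + (v 0).re := by simp
    have expand : ∀ j : Fin n, ((u + v) j.succ).im * ((u + v) j.succ).im
        = ((u j.succ).im) ^ 2 + ((v j.succ).im) ^ 2 + 2 * ((u j.succ).im * (v j.succ).im) := by
      intro j; simp only [Pi.add_apply, Complex.add_im]; ring
    rw [hadd0, Finset.sum_congr rfl fun j _ => expand j, Finset.sum_add_distrib,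
      Finset.sum_add_distrib, ← Finset.mul_sum]
    have cs := Finset.sum_mul_sq_le_sq_mul_sq Finset.univ
      (fun j : Fin n => (u j.succ).im) (fun j : Fin n => (v j.succ).im)
    have hQnn : (0:ℝ) ≤ ∑ j : Fin n, ((u j.succ).im) ^ 2 :=
      Finset.sum_nonneg fun j _ => sq_nonneg _
    have hSnn : (0:ℝ) ≤ ∑ j : Fin n, ((v j.succ).im) ^ 2 :=
      Finset.sum_nonneg fun j _ => sq_nonneg _
    have hP : 0 < (u 0).re := hu.2.1
    have hR : 0 < (v 0).re := hv.2.1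
    have hQS : ∑ j : Fin n, (u j.succ).im * (v j.succ).im < (u 0).re * (v 0).re := by
      nlinarith [cs, hQnn, hSnn, mul_pos hP hR]
    nlinarith

lemma memXi_mk {n : ℕ} (z : Fin (n+1) → ℂ) (h0 : 0 < (z 0).re)
    (hq : ∑ j : Fin n, ((z j.succ).im) ^ 2 < (z 0).re ^ 2)
    (hzz : dotC n z z = 1) : memXi n z := by
  set x : Fin (n+1) → ℂ := fun j => if j = 0 then ((z 0).re : ℂ) else Complex.I * ((z j).im : ℂ)
    with hxdef
  set y : Fin (n+1) → ℂ := fun j => if j = 0 then ((z 0).im : ℂ)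
    else Complex.I * (-((z j).re) : ℝ) with hydef
  have hxV : memV n x := by
    constructor
    · simp [hxdef]
    · intro j hj; simp [hxdef, hj]
  have hyV : memV n y := by
    constructor
    · simp [hydef]
    · intro j hj; simp [hydef, hj]
  have hx0 : (x 0).re = (z 0).re := by simp [hxdef]
  refine ⟨⟨x, y, ⟨hxV, by rw [hx0]; exact h0, ?_⟩, hyV, ?_⟩, hzz⟩
  · rw [mydot_re hxV hxV, hx0]
    have hxs : ∀ j : Fin n, (x j.succ).im = (z j.succ).im := by
      intro j; simp [hxdef, Fin.succ_ne_zero j]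
    rw [Finset.sum_congr rfl fun j _ => by rw [hxs j], sum_sq_eq']
    nlinarith [hq]
  · funext j
    by_cases hj : j = 0
    · subst hj
      simp only [Pi.add_apply, Pi.smul_apply, smul_eq_mul, hxdef, hydef, if_pos rfl]
      apply Complex.ext <;> simp
    · simp only [Pi.add_apply, Pi.smul_apply, smul_eq_mul, hxdef, hydef, if_neg hj]
      apply Complex.ext <;> simp [Complex.mul_re, Complex.mul_im]

def zVec (m : ℕ) (ζ : ℂ) : Fin (m+2) → ℂ :=
  Fin.cons (Complex.cos ζ) (Fin.cons (Complex.sin ζ) 0)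

lemma zVec_dot (m : ℕ) (ζ η : ℂ) :
    dotC (m+1) (zVec m ζ) (zVec m η) = Complex.cos (ζ - η) := by
  rw [Complex.cos_sub, dotC, Fin.sum_univ_succ, Fin.sum_univ_succ]
  simp [zVec]

lemma cos_re' (z : ℂ) : (Complex.cos z).re = Real.cos z.re * Real.cosh z.im := by
  rw [Complex.cos_eq]
  simp [Complex.mul_re, Complex.mul_im, Complex.cos_ofReal_re, Complex.sin_ofReal_re,
    Complex.cosh_ofReal_re, Complex.sinh_ofReal_re, Complex.cos_ofReal_im,
    Complex.sin_ofReal_im, Complex.cosh_ofReal_im, Complex.sinh_ofReal_im]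

lemma sin_im' (z : ℂ) : (Complex.sin z).im = Real.cos z.re * Real.sinh z.im := by
  rw [Complex.sin_eq]
  simp [Complex.mul_re, Complex.mul_im, Complex.cos_ofReal_re, Complex.sin_ofReal_re,
    Complex.cosh_ofReal_re, Complex.sinh_ofReal_re, Complex.cos_ofReal_im,
    Complex.sin_ofReal_im, Complex.cosh_ofReal_im, Complex.sinh_ofReal_im]

lemma zVec_mem (m : ℕ) (ζ : ℂ) (h : 0 < Real.cos ζ.re) : memXi (m+1) (zVec m ζ) := by
  apply memXi_mk
  · have h0 : (zVec m ζ) 0 = Complex.cos ζ := rfl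
    rw [h0, cos_re']
    exact mul_pos h (Real.cosh_pos _)
  · have hsum : ∑ j : Fin (m+1), (((zVec m ζ) j.succ).im) ^ 2
        = ((Complex.sin ζ).im) ^ 2 := by
      rw [Fin.sum_univ_succ]
      simp [zVec]
    rw [hsum]
    have h0 : (zVec m ζ) 0 = Complex.cos ζ := rfl
    rw [h0, cos_re', sin_im']
    have hc := Real.cosh_sq ζ.im
    nlinarith [mul_pos h h]
  · rw [dotC, Fin.sum_univ_succ, Fin.sum_univ_succ]
    simp [zVec]
    linear_combination Complex.cos_sq_add_sin_sq ζ

lemma neg_real_w (w : ℂ) (hw : w ≠ 0) (him : w.im = 0) (hre : w.re < 0) :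
    ((w + w⁻¹)/2).im = 0 ∧ ((w + w⁻¹)/2).re ≤ -1 := by
  have hns : Complex.normSq w = w.re * w.re := by
    simp [Complex.normSq_apply, him]
  have hinv_im : (w⁻¹).im = 0 := by simp [Complex.inv_im, him]
  have hinv_re : (w⁻¹).re = w.re / (w.re * w.re) := by
    rw [Complex.inv_re, hns]
  have hrene : w.re ≠ 0 := by
    intro h0
    exact hw (Complex.ext (by simp [h0]) (by simp [him]))
  constructor
  · simp [Complex.div_im, Complex.add_im, him, hinv_im]
  · have h2 : ((w + w⁻¹)/2).re = (w.re + w.re / (w.re * w.re)) / 2 := by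
      rw [show ((2:ℂ)) = ((2:ℝ):ℂ) by norm_num, Complex.div_ofReal_re]
      rw [Complex.add_re, hinv_re]
    rw [h2]
    have hfs : w.re / (w.re * w.re) = 1 / w.re := by field_simp
    rw [hfs]
    have hkey : (w.re + 1 / w.re + 2) * w.re = (w.re + 1) ^ 2 := by field_simp; ring
    nlinarith [sq_nonneg (w.re + 1), hre, hkey]

lemma exists_delta (c : ℂ) (hc : ¬(c.im = 0 ∧ c.re ≤ -1)) :
    ∃ δ : ℂ, Complex.cos δ = c ∧ -Real.pi < δ.re ∧ δ.re < Real.pi := by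
  obtain ⟨w, hw0, hwneg, hwc⟩ :
      ∃ w : ℂ, w ≠ 0 ∧ ¬(w.im = 0 ∧ w.re < 0) ∧ (w + w⁻¹)/2 = c := by
    by_cases h1 : c = 1
    · exact ⟨1, one_ne_zero, by norm_num, by subst h1; norm_num⟩
    · have hm1 : c ≠ -1 := by
        rintro rfl
        exact hc ⟨by norm_num, by norm_num⟩
      have hsq : c ^ 2 - 1 ≠ 0 := by
        intro h
        have hfac : (c - 1) * (c + 1) = 0 := by linear_combination h
        rcases mul_eq_zero.1 hfac with h' | h'
        · exact h1 (by linear_combination h')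
        · exact hm1 (by linear_combination h')
      set s := Complex.exp (Complex.log (c ^ 2 - 1) / 2) with hs
      have hs2 : s ^ 2 = c ^ 2 - 1 := by
        rw [hs, sq, ← Complex.exp_add]
        rw [show Complex.log (c ^ 2 - 1) / 2 + Complex.log (c ^ 2 - 1) / 2
          = Complex.log (c ^ 2 - 1) by ring]
        exact Complex.exp_log hsq
      have hmul : (c + s) * (c - s) = 1 := by linear_combination -hs2
      have hw0 : c + s ≠ 0 := by
        intro h
        rw [h, zero_mul] at hmul
        exact zero_ne_one hmul
      have hinv : (c + s)⁻¹ = c - s := inv_eq_of_mul_eq_one_right hmul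
      have hwc' : ((c + s) + (c + s)⁻¹)/2 = c := by rw [hinv]; ring
      refine ⟨c + s, hw0, ?_, hwc'⟩
      rintro ⟨him, hre⟩
      have hcon := neg_real_w _ hw0 him hre
      rw [hwc'] at hcon
      exact hc hcon
  have harg_lt : Complex.arg w < Real.pi := by
    refine lt_of_le_of_ne (Complex.arg_le_pi w) fun h => ?_
    obtain ⟨h1, h2⟩ := Complex.arg_eq_pi_iff.1 h
    exact hwneg ⟨h2, h1⟩
  refine ⟨-Complex.I * Complex.log w, ?_, ?_, ?_⟩
  · have hδI : (-Complex.I * Complex.log w) * Complex.I = Complex.log w := by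
      linear_combination (-(Complex.log w)) * Complex.I_sq
    rw [Complex.cos, hδI, show -(-Complex.I * Complex.log w) * Complex.I
        = -Complex.log w by linear_combination (Complex.log w) * Complex.I_sq,
      Complex.exp_log hw0, Complex.exp_neg, Complex.exp_log hw0, ← hwc]
  · have hre' : (-Complex.I * Complex.log w).re = (Complex.log w).im := by
      simp [Complex.mul_re]
    rw [hre', Complex.log_im]
    exact Complex.neg_pi_lt_arg w
  · have hre' : (-Complex.I * Complex.log w).re = (Complex.log w).im := by
      simp [Complex.mul_re]
    rw [hre', Complex.log_im]
    exact harg_lt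


/-- Lemma 3.4 (lem:xi-values): {z·w : z, w ∈ Ξ} = ℂ \ (−∞,−1]. -/
theorem stmt_2 (n : ℕ) (hn : 1 ≤ n) :
    {c : ℂ | ∃ z w : Fin (n+1) → ℂ, memXi n z ∧ memXi n w ∧ dotC n z w = c}
      = {c : ℂ | c.im = 0 ∧ c.re ≤ -1}ᶜ := by
  obtain ⟨m, rfl⟩ : ∃ m, n = m + 1 := ⟨n - 1, (Nat.succ_pred_eq_of_pos hn).symm⟩
  ext c
  simp only [Set.mem_setOf_eq, Set.mem_compl_iff]
  constructor
  · rintro ⟨z, w, hz, hw, rfl⟩ ⟨him, hre⟩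
    obtain ⟨⟨x, y, hx, hy, hzd⟩, hzz⟩ := hz
    obtain ⟨⟨x', y', hx', hy', hwd⟩, hww⟩ := hw
    have ha : memVplus (m+1) (x + x') := key_cone_add hx hx'
    have hbV : memV (m+1) (y + y') := myV_add hy hy'
    have hsum : dotC (m+1) (z + w) (z + w) = 2 + 2 * dotC (m+1) z w := by
      have e : ∀ p q : ℂ, (p + q) * (p + q) = p * p + q * q + 2 * (p * q) := by
        intro p q; ring
      calc dotC (m+1) (z + w) (z + w)
          = ∑ j : Fin (m+2), (z j * z j + w j * w j + 2 * (z j * w j)) :=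
            Finset.sum_congr rfl fun j _ => e (z j) (w j)
        _ = dotC (m+1) z z + dotC (m+1) w w + 2 * dotC (m+1) z w := by
            rw [dotC, dotC, dotC, Finset.sum_add_distrib, Finset.sum_add_distrib,
              ← Finset.mul_sum]
        _ = 2 + 2 * dotC (m+1) z w := by rw [hzz, hww]; ring
    have hzw2 : z + w = (x + x') + Complex.I • (y + y') := by
      rw [hzd, hwd]
      funext j
      simp only [Pi.add_apply, Pi.smul_apply, smul_eq_mul]
      ring
    have hexp : dotC (m+1) (z + w) (z + w)
        = dotC (m+1) (x + x') (x + x') - dotC (m+1) (y + y') (y + y')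
          + 2 * Complex.I * dotC (m+1) (x + x') (y + y') := by
      rw [hzw2]
      have e : ∀ p q : ℂ, (p + Complex.I * q) * (p + Complex.I * q)
          = p * p - q * q + 2 * Complex.I * (p * q) := by
        intro p q; linear_combination (q * q) * Complex.I_sq
      calc dotC (m+1) ((x + x') + Complex.I • (y + y')) ((x + x') + Complex.I • (y + y'))
          = ∑ j : Fin (m+2), ((x + x') j * (x + x') j - (y + y') j * (y + y') j
              + 2 * Complex.I * ((x + x') j * (y + y') j)) :=
            Finset.sum_congr rfl fun j _ => e ((x + x') j) ((y + y') j)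
        _ = _ := by
            rw [dotC, dotC, dotC, Finset.sum_add_distrib, Finset.sum_sub_distrib,
              ← Finset.mul_sum]
    have heq := hsum.symm.trans hexp
    have haa := mydot_im ha.1 ha.1
    have hbb := mydot_im hbV hbV
    have hab := mydot_im ha.1 hbV
    have him2 : (dotC (m+1) (x + x') (y + y')).re = 0 := by
      have h := congrArg Complex.im heq
      simp only [Complex.add_im, Complex.sub_im, Complex.mul_im, Complex.mul_re,
        Complex.im_ofNat, Complex.re_ofNat, Complex.I_re, Complex.I_im, haa, hbb, hab,
        him] at h
      linarith [h]
    have hble := key_spacelike ha hbV him2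
    have hpos : 0 < (dotC (m+1) (x + x') (x + x')).re := ha.2.2
    have h := congrArg Complex.re heq
    simp only [Complex.add_re, Complex.sub_re, Complex.mul_re, Complex.mul_im,
      Complex.im_ofNat, Complex.re_ofNat, Complex.I_re, Complex.I_im, haa, hbb, hab,
      him2] at h
    -- h : 2 + 2 * (dotC z w).re = (dotC a a).re - (dotC b b).re (up to arithmetic)
    linarith [h, hble, hpos, hre]
  · intro hcm
    obtain ⟨δ, hcos, h1, h2⟩ := exists_delta c hcm
    have hre2 : (δ / 2).re = δ.re / 2 := by
      rw [show ((2:ℂ)) = ((2:ℝ):ℂ) by norm_num, Complex.div_ofReal_re]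
    have hreneg : (-(δ / 2)).re = -(δ.re / 2) := by rw [Complex.neg_re, hre2]
    have hcospos : 0 < Real.cos (δ / 2).re := by
      apply Real.cos_pos_of_mem_Ioo
      constructor <;> rw [hre2] <;> [linarith; linarith]
    have hcospos' : 0 < Real.cos (-(δ / 2)).re := by
      apply Real.cos_pos_of_mem_Ioo
      constructor <;> rw [hreneg] <;> [linarith; linarith]
    refine ⟨zVec m (δ / 2), zVec m (-(δ / 2)), zVec_mem m _ hcospos, zVec_mem m _ hcospos', ?_⟩
    rw [zVec_dot, show δ / 2 - -(δ / 2) = δ by ring, hcos]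


end
end

section
/- The set { (1/2)(z w⁻¹ + w z⁻¹) : z, w ∈ ℂ, Re z > 0, Re w > 0 } equals ℂ \ {t ∈ ℝ : t ≤ −1}. (Paper: computation in Example 3.3 (ex:n1), establishing the case n = 1 of Lemma 3.4 and used in Theorem 4.3.) -/
open MeasureTheory Real

noncomputable section

/-- Example 3.3 (ex:n1): {(1/2)(z/w + w/z) : Re z > 0, Re w > 0} = ℂ \ (−∞,−1]. -/
theorem stmt_3 :
    {c : ℂ | ∃ z w : ℂ, 0 < z.re ∧ 0 < w.re ∧ (1/2) * (z / w + w / z) = c}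
      = {c : ℂ | c.im = 0 ∧ c.re ≤ -1}ᶜ := by
  ext c
  simp only [Set.mem_setOf_eq, Set.mem_compl_iff, not_and, not_le]
  constructor
  · rintro ⟨z, w, hz, hw, hc⟩ him
    by_contra hle
    push_neg at hle
    have hz0 : z ≠ 0 := fun h => by simp [h] at hz
    have hw0 : w ≠ 0 := fun h => by simp [h] at hw
    set t := z / w with htdef
    have ht0 : t ≠ 0 := div_ne_zero hz0 hw0
    have htw : t * w = z := div_mul_cancel₀ z hw0
    have hE : t ^ 2 + 1 = 2 * c * t := by
      have hwz : w / z = t⁻¹ := by rw [htdef, inv_div]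
      rw [hwz] at hc
      field_simp at hc
      linear_combination hc
    have e1 : t.re ^ 2 - t.im ^ 2 + 1 = 2 * c.re * t.re := by
      have := congrArg Complex.re hE
      simp [Complex.mul_re, Complex.mul_im, pow_two, him] at this
      nlinarith [this]
    have e2 : t.im * (t.re - c.re) = 0 := by
      have := congrArg Complex.im hE
      simp [Complex.mul_re, Complex.mul_im, pow_two, him] at this
      nlinarith [this]
    have zre : z.re = t.re * w.re - t.im * w.im := by
      rw [← htw]; simp [Complex.mul_re]
    rcases mul_eq_zero.mp e2 with hy | hx
    · -- t.im = 0
      have hzx : z.re = t.re * w.re := by rw [zre, hy]; ring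
      have hx : 0 < t.re := by
        by_contra hxn; push_neg at hxn
        nlinarith [hz, hw, hzx]
      nlinarith [hle, e1]
    · -- t.re = c.re
      have hre : t.re = c.re := by linarith
      have hy : t.im = 0 := by nlinarith [e1, hle]
      have hzx : z.re = t.re * w.re := by rw [zre, hy]; ring
      nlinarith [hz, hw, hzx, hle]
  · intro h
    obtain ⟨d, hd⟩ : ∃ d : ℂ, d ^ 2 = c ^ 2 - 1 :=
      ⟨(c^2-1) ^ (((2:ℕ):ℂ))⁻¹, Complex.cpow_nat_inv_pow _ two_ne_zero⟩
    set t := c + d with htdef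
    have hct : t * (c - d) = 1 := by
      have h' : t * (c - d) = c ^ 2 - d ^ 2 := by rw [htdef]; ring
      rw [h', hd]; ring
    have ht0 : t ≠ 0 := left_ne_zero_of_mul_eq_one hct
    have htinv : t⁻¹ = c - d := inv_eq_of_mul_eq_one_right hct
    have hnotneg : ¬ (t.im = 0 ∧ t.re ≤ 0) := by
      rintro ⟨h1, h2⟩
      have hx : t.re < 0 := by
        rcases lt_or_eq_of_le h2 with h | h
        · exact h
        · exact absurd (Complex.ext (by simp [← h]) (by simp [h1])) ht0
      have hc2 : 2 * c = t + t⁻¹ := by rw [htinv]; ring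
      have hns : Complex.normSq t = t.re ^ 2 := by
        simp [Complex.normSq_apply, h1, pow_two]
      have hcim : c.im = 0 := by
        have := congrArg Complex.im hc2
        simp [Complex.inv_im, h1, hns] at this
        linarith
      have hcre : c.re ≤ -1 := by
        have := congrArg Complex.re hc2
        simp [Complex.inv_re, hns] at this
        have h3 : 2 * c.re = t.re + t.re / t.re ^ 2 := this
        have h4 : t.re / t.re ^ 2 = 1 / t.re := by
          rw [pow_two, div_mul_eq_div_div]
          rw [div_self (ne_of_lt hx)]
        rw [h4] at h3
        have h5 : t.re * (2 * c.re) = t.re * (t.re + 1 / t.re) := by rw [h3]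
        have h6 : t.re * (1 / t.re) = 1 := by
          rw [mul_one_div, div_self (ne_of_lt hx)]
        nlinarith [sq_nonneg (t.re + 1)]
      linarith [h hcim]
    have harg : Complex.arg t ∈ Set.Ioo (-π) π := by
      constructor
      · exact (Complex.arg_mem_Ioc t).1
      · rcases lt_or_eq_of_le (Complex.arg_mem_Ioc t).2 with h' | h'
        · exact h'
        · exact absurd ⟨(Complex.arg_eq_pi_iff.mp h').2, le_of_lt (Complex.arg_eq_pi_iff.mp h').1⟩ hnotneg
    set s := Complex.exp (Complex.log t / 2) with hsdef
    have hs2 : s ^ 2 = t := by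
      rw [hsdef, pow_two, ← Complex.exp_add]
      rw [show Complex.log t / 2 + Complex.log t / 2 = Complex.log t by ring]
      exact Complex.exp_log ht0
    have hs0 : s ≠ 0 := Complex.exp_ne_zero _
    have hsim : (Complex.log t / 2).im = Complex.arg t / 2 := by
      rw [show (Complex.log t / 2).im = (Complex.log t).im / 2 by simp [Complex.div_im]]
      rw [Complex.log_im]
    have hsre : 0 < s.re := by
      rw [hsdef, Complex.exp_re, hsim]
      apply mul_pos (Real.exp_pos _)
      apply Real.cos_pos_of_mem_Ioo
      constructor <;> [linarith [harg.1]; linarith [harg.2, Real.pi_pos]]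
    refine ⟨s, s⁻¹, hsre, ?_, ?_⟩
    · rw [Complex.inv_re]
      exact div_pos hsre (Complex.normSq_pos.mpr hs0)
    · have h1 : s / s⁻¹ = t := by rw [div_eq_mul_inv, inv_inv, ← pow_two, hs2]
      have h2 : s⁻¹ / s = t⁻¹ := by
        rw [← hs2]; field_simp
      rw [h1, h2, htinv, htdef]; ring

end
end

section
/- Let n ≥ 1. The union of the G^c-orbits of points of the open half-sphere S^n₊ equals the intersection of the tube with the complex sphere: ⋃_{g ∈ G^c} g·S^n₊ = T_{V₊} ∩ S^n_ℂ. (Paper: Proposition 3.2(ii): Ξ := G^c·S^n₊ = T_{V₊} ∩ S^n_ℂ.) -/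
open MeasureTheory

noncomputable section

namespace SAux
variable {n : ℕ}

lemma dotC_comm (z w : Fin (n+1) → ℂ) : dotC n z w = dotC n w z := by
  simp [dotC, mul_comm]

lemma dotC_add_left (a b c : Fin (n+1) → ℂ) :
    dotC n (a + b) c = dotC n a c + dotC n b c := by
  simp [dotC, add_mul, Finset.sum_add_distrib]

lemma dotC_sub_left (a b c : Fin (n+1) → ℂ) :
    dotC n (a - b) c = dotC n a c - dotC n b c := by
  simp [dotC, sub_mul, Finset.sum_sub_distrib]

lemma dotC_smul_left (r : ℂ) (a b : Fin (n+1) → ℂ) :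
    dotC n (r • a) b = r * dotC n a b := by
  simp [dotC, Finset.mul_sum, mul_assoc]

lemma dotC_add_right (a b c : Fin (n+1) → ℂ) :
    dotC n a (b + c) = dotC n a b + dotC n a c := by
  rw [dotC_comm, dotC_add_left, dotC_comm a b, dotC_comm c a]

lemma dotC_smul_right (r : ℂ) (a b : Fin (n+1) → ℂ) :
    dotC n a (r • b) = r * dotC n a b := by
  rw [dotC_comm, dotC_smul_left, dotC_comm]

lemma dotC_std_left (z : Fin (n+1) → ℂ) : dotC n (stdC n 0) z = z 0 := by
  simp [dotC, stdC, ite_mul]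

lemma dotC_std_right (z : Fin (n+1) → ℂ) : dotC n z (stdC n 0) = z 0 := by
  rw [dotC_comm, dotC_std_left]

lemma dotC_im_zero {z w : Fin (n+1) → ℂ} (hz : memV n z) (hw : memV n w) :
    (dotC n z w).im = 0 := by
  rw [dotC, Complex.im_sum]
  refine Finset.sum_eq_zero fun j _ => ?_
  rcases eq_or_ne j 0 with h | h
  · subst h; rw [Complex.mul_im, hz.1, hw.1]; ring
  · rw [Complex.mul_im, hz.2 j h, hw.2 j h]; ring

lemma memV_smul {z : Fin (n+1) → ℂ} (c : ℂ) (hc : c.im = 0) (hz : memV n z) :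
    memV n (c • z) := by
  constructor
  · show (c * z 0).im = 0
    rw [Complex.mul_im, hc, hz.1]; ring
  · intro j hj
    show (c * z j).re = 0
    rw [Complex.mul_re, hc, hz.2 j hj]; ring

lemma memV_sub {z w : Fin (n+1) → ℂ} (hz : memV n z) (hw : memV n w) :
    memV n (z - w) := by
  constructor
  · show (z 0 - w 0).im = 0
    rw [Complex.sub_im, hz.1, hw.1]; ring
  · intro j hj
    show (z j - w j).re = 0
    rw [Complex.sub_re, hz.2 j hj, hw.2 j hj]; ring

def dotL (n : ℕ) (w : Fin (n+1) → ℂ) : (Fin (n+1) → ℂ) →ₗ[ℂ] ℂ where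
  toFun z := dotC n z w
  map_add' a b := dotC_add_left a b w
  map_smul' r a := by simpa using dotC_smul_left r a w

def reflL (n : ℕ) (w : Fin (n+1) → ℂ) :
    (Fin (n+1) → ℂ) →ₗ[ℂ] (Fin (n+1) → ℂ) :=
  LinearMap.id - LinearMap.smulRight ((2 / dotC n w w) • dotL n w) w

lemma reflL_apply (w z : Fin (n+1) → ℂ) :
    reflL n w z = z - (2 / dotC n w w * dotC n z w) • w := rfl

lemma dot_expand (a b w : Fin (n+1) → ℂ) (c d : ℂ) :
    dotC n (a - c • w) (b - d • w)
      = dotC n a b - d * dotC n a w - c * dotC n b w + c * d * dotC n w w := by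
  have h : ∀ j : Fin (n+1), (a j - c * w j) * (b j - d * w j)
      = a j * b j - d * (a j * w j) - c * (b j * w j) + c * d * (w j * w j) :=
    fun j => by ring
  simp only [dotC, Pi.sub_apply, Pi.smul_apply, smul_eq_mul, h,
    Finset.sum_add_distrib, Finset.sum_sub_distrib, ← Finset.mul_sum]

lemma dot_reflL {w : Fin (n+1) → ℂ} (hw : dotC n w w ≠ 0) (a b : Fin (n+1) → ℂ) :
    dotC n (reflL n w a) (reflL n w b) = dotC n a b := by
  rw [reflL_apply, reflL_apply, dot_expand]
  field_simp
  ring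

lemma reflL_reflL {w : Fin (n+1) → ℂ} (hw : dotC n w w ≠ 0) (z : Fin (n+1) → ℂ) :
    reflL n w (reflL n w z) = z := by
  rw [reflL_apply, reflL_apply]
  have h1 : dotC n (z - (2 / dotC n w w * dotC n z w) • w) w
      = dotC n z w - (2 / dotC n w w * dotC n z w) * dotC n w w := by
    rw [dotC_sub_left, dotC_smul_left]
  have h2 : 2 / dotC n w w * (dotC n z w - (2 / dotC n w w * dotC n z w) * dotC n w w)
      = -(2 / dotC n w w * dotC n z w) := by
    field_simp; ring
  rw [h1, h2, neg_smul, sub_neg_eq_add, sub_add_cancel]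

lemma reflL_memV {w z : Fin (n+1) → ℂ} (hw : memV n w) (hz : memV n z) :
    memV n (reflL n w z) := by
  rw [reflL_apply]
  refine memV_sub hz (memV_smul _ ?_ hw)
  have h1 : (dotC n z w).im = 0 := dotC_im_zero hz hw
  have h2 : (dotC n w w).im = 0 := dotC_im_zero hw hw
  rw [Complex.mul_im, Complex.div_im]
  simp [h1, h2]

lemma reflL_smul_self {w : Fin (n+1) → ℂ} (hw : dotC n w w ≠ 0) (c : ℂ) :
    reflL n w (c • w) = -(c • w) := by
  rw [reflL_apply, dotC_smul_left]
  have : 2 / dotC n w w * (c * dotC n w w) = 2 * c := by field_simp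
  rw [this, two_mul, add_smul]
  abel

end SAux

open SAux

/-- Proposition 3.2 (ii): Ξ := G^c·S^n₊ = T_{V₊} ∩ S^n_ℂ. -/
theorem stmt_5 (n : ℕ) (hn : 1 ≤ n) :
    {z : Fin (n+1) → ℂ | ∃ g : (Fin (n+1) → ℂ) →ₗ[ℂ] (Fin (n+1) → ℂ),
        isGc n g ∧ ∃ x : Fin (n+1) → ℂ,
          ((∀ j, (x j).im = 0) ∧ dotC n x x = 1 ∧ 0 < (x 0).re) ∧ z = g x}
      = {z | memXi n z} := by
  ext z
  simp only [Set.mem_setOf_eq]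
  constructor
  · -- forward: orbit ⊆ Ξ
    rintro ⟨g, ⟨hgbij, hgdot, hgV, hgpos⟩, x, ⟨hxre, hxdot, hx0⟩, rfl⟩
    have hstd00 : stdC n 0 0 = 1 := by simp [stdC]
    set p : Fin (n+1) → ℂ := (x 0) • stdC n 0 with hp
    set q : Fin (n+1) → ℂ := fun j => if j = 0 then 0 else -Complex.I * x j with hq
    have hxpq : x = p + Complex.I • q := by
      funext j
      show x j = x 0 * stdC n 0 j + Complex.I * q j
      rcases eq_or_ne j 0 with h | h
      · subst h; simp [hq, stdC]
      · simp only [hq, stdC, if_neg h]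
        rw [mul_zero, zero_add]
        linear_combination (x j) * Complex.I_mul_I
    have hpV : memV n p := by
      constructor
      · show (x 0 * stdC n 0 0).im = 0
        rw [hstd00, mul_one]; exact hxre 0
      · intro j hj
        show (x 0 * stdC n 0 j).re = 0
        simp [stdC, hj]
    have hqV : memV n q := by
      constructor
      · show ((if (0:Fin (n+1)) = 0 then (0:ℂ) else -Complex.I * x 0)).im = 0
        simp
      · intro j hj
        show ((if j = 0 then (0:ℂ) else -Complex.I * x j)).re = 0
        rw [if_neg hj, Complex.mul_re]
        simp [hxre j]
    have hgp0 : (g p) 0 = x 0 * (g (stdC n 0)) 0 := by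
      rw [hp, LinearMap.map_smul]; rfl
    have hdotpp : dotC n p p = x 0 * (x 0 * 1) := by
      rw [hp, SAux.dotC_smul_left, SAux.dotC_smul_right, SAux.dotC_std_left, hstd00]
    constructor
    · refine ⟨g p, g q, ⟨hgV p hpV, ?_, ?_⟩, hgV q hqV, ?_⟩
      · rw [hgp0, Complex.mul_re, hxre 0]
        simpa using mul_pos hx0 hgpos
      · rw [hgdot p p, hdotpp, mul_one, Complex.mul_re, hxre 0]
        simpa using mul_pos hx0 hx0
      · rw [hxpq, map_add, LinearMap.map_smul, LinearMap.map_smul]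
    · rw [hgdot, hxdot]
  · -- reverse: Ξ ⊆ orbit
    rintro ⟨⟨x', y', ⟨hx'V, hx'0, hx'dot⟩, hy'V, rfl⟩, hzdot⟩
    have hA_im : (dotC n x' x').im = 0 := SAux.dotC_im_zero hx'V hx'V
    set a : ℝ := Real.sqrt ((dotC n x' x').re) with ha_def
    have ha : 0 < a := Real.sqrt_pos.mpr hx'dot
    have ha0 : (a : ℂ) ≠ 0 := by exact_mod_cast ha.ne'
    have hA : dotC n x' x' = ((a * a : ℝ) : ℂ) := by
      have h1 : a * a = (dotC n x' x').re := Real.mul_self_sqrt hx'dot.le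
      apply Complex.ext <;> simp [h1, hA_im]
    set u : Fin (n+1) → ℂ := ((a:ℂ)⁻¹) • x' with hu_def
    have huV : memV n u := SAux.memV_smul _ (by simp) hx'V
    have huu : dotC n u u = 1 := by
      rw [hu_def, SAux.dotC_smul_left, SAux.dotC_smul_right, hA]
      push_cast
      field_simp
    have huu_ne : dotC n u u ≠ 0 := by rw [huu]; exact one_ne_zero
    have hu0im : (u 0).im = 0 := huV.1
    have hu0 : 0 < (u 0).re := by
      have : u 0 = (a:ℂ)⁻¹ * x' 0 := rfl
      rw [this, ← Complex.ofReal_inv, Complex.mul_re]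
      simpa using mul_pos (inv_pos.mpr ha) hx'0
    have hx'u : x' = (a:ℂ) • u := by
      rw [hu_def, smul_smul, mul_inv_cancel₀ ha0, one_smul]
    set m : Fin (n+1) → ℂ := stdC n 0 + u with hm_def
    have hmV : memV n m := by
      constructor
      · show ((stdC n 0 + u) 0).im = 0
        simp [stdC, hu0im]
      · intro j hj
        show ((stdC n 0 + u) j).re = 0
        simp [stdC, hj, huV.2 j hj]
    have hmm : dotC n m m = 2 + 2 * u 0 := by
      rw [hm_def, SAux.dotC_add_left, SAux.dotC_add_right, SAux.dotC_add_right,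
        SAux.dotC_std_left, SAux.dotC_std_left, SAux.dotC_std_right, huu]
      simp [stdC]
      ring
    have hmm_ne : dotC n m m ≠ 0 := by
      rw [hmm]
      intro h
      have := congrArg Complex.re h
      simp [Complex.add_re, Complex.mul_re, hu0im] at this
      linarith
    have h2u : (2 : ℂ) + 2 * u 0 ≠ 0 := hmm ▸ hmm_ne
    -- key reflection computations
    have hrm_e0 : reflL n m (stdC n 0) = -u := by
      rw [SAux.reflL_apply]
      have hd : dotC n (stdC n 0) m = 1 + u 0 := by
        rw [SAux.dotC_std_left, hm_def]
        simp [stdC]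
      rw [hd, hmm]
      have hc : 2 / ((2:ℂ) + 2 * u 0) * (1 + u 0) = 1 := by
        rw [div_mul_eq_mul_div, div_eq_one_iff_eq h2u]; ring
      rw [hc, one_smul, hm_def]
      abel
    have hru_u : reflL n u u = -u := by
      have := SAux.reflL_smul_self huu_ne 1
      simpa using this
    have hrm_negu : reflL n m (-u) = stdC n 0 := by
      rw [SAux.reflL_apply]
      have hd : dotC n (-u) m = -(1 + u 0) := by
        have hnu : (-u) = (-1:ℂ) • u := by simp
        rw [hnu, SAux.dotC_smul_left, hm_def, SAux.dotC_add_right, SAux.dotC_std_right, huu]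
        ring
      rw [hd, hmm]
      have hc : 2 / ((2:ℂ) + 2 * u 0) * (-(1 + u 0)) = -1 := by
        rw [div_mul_eq_mul_div, div_eq_iff h2u]; ring
      rw [hc, neg_one_smul, sub_neg_eq_add, hm_def]
      abel
    have hg_e0 : reflL n u (reflL n m (stdC n 0)) = u := by
      rw [hrm_e0]
      have h1 : -u = (-1 : ℂ) • u := by simp
      rw [h1, SAux.reflL_smul_self huu_ne]
      simp
    have hgi_u : reflL n m (reflL n u u) = stdC n 0 := by
      rw [hru_u, hrm_negu]
    have hgi_dot : ∀ v w, dotC n (reflL n m (reflL n u v)) (reflL n m (reflL n u w))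
        = dotC n v w := fun v w => by
      rw [SAux.dot_reflL hmm_ne, SAux.dot_reflL huu_ne]
    have hgi_x' : reflL n m (reflL n u x') = (a:ℂ) • stdC n 0 := by
      rw [hx'u, LinearMap.map_smul, LinearMap.map_smul, hgi_u]
    set y'' : Fin (n+1) → ℂ := reflL n m (reflL n u y') with hy''_def
    have hy''V : memV n y'' := SAux.reflL_memV hmV (SAux.reflL_memV huV hy'V)
    -- dotC x' y' = 0
    have hCim : (dotC n x' y').im = 0 := SAux.dotC_im_zero hx'V hy'V
    have hC : dotC n x' y' = 0 := by
      have hexp : dotC n (x' + Complex.I • y') (x' + Complex.I • y')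
          = dotC n x' x' + Complex.I * dotC n x' y'
            + Complex.I * (dotC n x' y' + Complex.I * dotC n y' y') := by
        simp only [SAux.dotC_add_left, SAux.dotC_add_right, SAux.dotC_smul_left,
          SAux.dotC_smul_right]
        all_goals (try rw [SAux.dotC_comm y' x']; try ring)
      have h := hzdot
      rw [hexp] at h
      have him := congrArg Complex.im h
      simp [Complex.add_im, Complex.mul_im, Complex.I_re, Complex.I_im, hA_im,
        hCim, SAux.dotC_im_zero hy'V hy'V] at him
      apply Complex.ext
      · simpa using him
      · simpa using hCim
    have hy''0 : y'' 0 = 0 := by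
      have h1 : dotC n (reflL n m (reflL n u x')) y'' = 0 := by
        rw [hy''_def, hgi_dot, hC]
      rw [hgi_x', SAux.dotC_smul_left, SAux.dotC_std_left] at h1
      exact (mul_eq_zero.mp h1).resolve_left ha0
    set x : Fin (n+1) → ℂ := reflL n m (reflL n u (x' + Complex.I • y')) with hx_def
    have hx_decomp : x = (a:ℂ) • stdC n 0 + Complex.I • y'' := by
      rw [hx_def, map_add, map_add, LinearMap.map_smul, LinearMap.map_smul, hgi_x', hy''_def]
    refine ⟨(reflL n u).comp (reflL n m), ⟨?_, ?_, ?_, ?_⟩, x, ⟨?_, ?_, ?_⟩, ?_⟩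
    · refine Function.bijective_iff_has_inverse.mpr
        ⟨fun v => reflL n m (reflL n u v), fun v => ?_, fun v => ?_⟩
      · show reflL n m (reflL n u (reflL n u (reflL n m v))) = v
        rw [SAux.reflL_reflL huu_ne, SAux.reflL_reflL hmm_ne]
      · show reflL n u (reflL n m (reflL n m (reflL n u v))) = v
        rw [SAux.reflL_reflL hmm_ne, SAux.reflL_reflL huu_ne]
    · intro v w
      show dotC n (reflL n u (reflL n m v)) (reflL n u (reflL n m w)) = dotC n v w
      rw [SAux.dot_reflL huu_ne, SAux.dot_reflL hmm_ne]
    · intro v hv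
      exact SAux.reflL_memV huV (SAux.reflL_memV hmV hv)
    · show 0 < ((reflL n u (reflL n m (stdC n 0))) 0).re
      rw [hg_e0]
      exact hu0
    · intro j
      rw [hx_decomp]
      show ((a:ℂ) * stdC n 0 j + Complex.I * y'' j).im = 0
      rcases eq_or_ne j 0 with h | h
      · subst h; rw [hy''0]; simp [stdC]
      · simp [stdC, h, Complex.mul_im, hy''V.2 j h]
    · show dotC n x x = 1
      rw [hx_def, hgi_dot, hzdot]
    · rw [hx_decomp]
      show 0 < ((a:ℂ) * stdC n 0 0 + Complex.I * y'' 0).re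
      rw [hy''0]
      simpa [stdC] using ha
    · show x' + Complex.I • y' = reflL n u (reflL n m x)
      rw [hx_def, SAux.reflL_reflL hmm_ne, SAux.reflL_reflL huu_ne]

end
end

section
/- Let n ≥ 1 and Ξ = T_{V₊} ∩ S^n_ℂ. Then the boundary of Ξ in the complex sphere, i.e. the set (closure of Ξ in ℂ^{n+1}) \ Ξ, equals {u + iv : u, v ∈ V, [u,u]_V = 0, u₀ ≥ 0, [v,v]_V = −1, [u,v]_V = 0}. (Paper: Lemma 3.6, lem:3.1.) -/
open MeasureTheory

noncomputable section

/-!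
Write `z = x + i y` with `x, y ∈ V`. On `V` the form `z · w` is real, so `z · z = 1` says
`[x,x] - [y,y] = 1` and `[x,y] = 0`, and `z ∈ Ξ` says moreover `x ∈ V₊`. Passing to the closure
only relaxes `x ∈ V₊` to `[x,x] ≥ 0, x₀ ≥ 0`; since `[x,x] > 0` forces `x₀ ≠ 0`, a boundary point
has `[x,x] = 0`. Conversely, a point `u + i v` of the claimed set is the limit as `t → 0⁺` of
`(u + t w) + i √(1 - [u + t w, u + t w]) v ∈ Ξ`, where `w = e₀ + v₀ v` is timelike, orthogonal to
`v`, and has `[u,w] = u₀ ≥ 0`.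
-/

open Complex Matrix Filter Topology

section

variable {n : ℕ}

lemma dotC_eq_dotProduct (z w : Fin (n+1) → ℂ) : dotC n z w = z ⬝ᵥ w := rfl

lemma add_I_smul_dotProduct_self {ι : Type*} [Fintype ι] (x y : ι → ℂ) :
    (x + I • y) ⬝ᵥ (x + I • y) = x ⬝ᵥ x - y ⬝ᵥ y + 2 * I * (x ⬝ᵥ y) := by
  simp only [add_dotProduct, dotProduct_add, smul_dotProduct, dotProduct_smul, smul_eq_mul,
    dotProduct_comm y x]
  linear_combination (y ⬝ᵥ y) * I_sq

lemma memV.add {x y : Fin (n+1) → ℂ} (hx : memV n x) (hy : memV n y) : memV n (x + y) :=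
  ⟨by simp [hx.1, hy.1], fun j hj => by simp [hx.2 j hj, hy.2 j hj]⟩

lemma memV.ofReal_smul {x : Fin (n+1) → ℂ} (hx : memV n x) (t : ℝ) : memV n ((t : ℂ) • x) :=
  ⟨by simp [hx.1], fun j hj => by simp [hx.2 j hj]⟩

lemma memV_single_zero_one : memV n (Pi.single 0 1) :=
  ⟨by simp, fun j hj => by simp [hj]⟩

lemma memV.coord_zero {x : Fin (n+1) → ℂ} (hx : memV n x) : x 0 = ((x 0).re : ℂ) :=
  Complex.ext rfl (by simp [hx.1])

lemma memV.im_dotC {x y : Fin (n+1) → ℂ} (hx : memV n x) (hy : memV n y) :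
    (dotC n x y).im = 0 := by
  rw [dotC, im_sum]
  refine Finset.sum_eq_zero fun j _ => ?_
  by_cases hj : j = 0
  · subst hj; simp [mul_im, hx.1, hy.1]
  · simp [mul_im, hx.2 j hj, hy.2 j hj]

lemma memV.re_dotC_self_le {x : Fin (n+1) → ℂ} (hx : memV n x) :
    (dotC n x x).re ≤ (x 0).re ^ 2 := by
  have hspace : ∀ j : Fin n, (x j.succ * x j.succ).re ≤ 0 := fun j => by
    simp [mul_re, hx.2 j.succ j.succ_ne_zero, mul_self_nonneg]
  rw [dotC, re_sum, Fin.sum_univ_succ, mul_re, hx.1, sq]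
  linarith [Finset.sum_nonpos fun j (_ : j ∈ Finset.univ) => hspace j]

def reV (n : ℕ) (z : Fin (n+1) → ℂ) : Fin (n+1) → ℂ :=
  fun j => if j = 0 then ((z 0).re : ℂ) else I * ((z j).im : ℂ)

def imV (n : ℕ) (z : Fin (n+1) → ℂ) : Fin (n+1) → ℂ :=
  fun j => if j = 0 then ((z 0).im : ℂ) else -(I * ((z j).re : ℂ))

lemma memV_reV (z : Fin (n+1) → ℂ) : memV n (reV n z) :=
  ⟨by simp [reV], fun j hj => by simp [reV, hj]⟩

lemma memV_imV (z : Fin (n+1) → ℂ) : memV n (imV n z) :=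
  ⟨by simp [imV], fun j hj => by simp [imV, hj]⟩

lemma reV_add_I_smul_imV (z : Fin (n+1) → ℂ) : reV n z + I • imV n z = z := by
  funext j
  by_cases hj : j = 0
  · subst hj; apply Complex.ext <;> simp [reV, imV]
  · apply Complex.ext <;> simp [reV, imV, hj]

lemma reV_add_I_smul {x y : Fin (n+1) → ℂ} (hx : memV n x) (hy : memV n y) :
    reV n (x + I • y) = x := by
  funext j
  by_cases hj : j = 0
  · subst hj; apply Complex.ext <;> simp [reV, hx.1, hy.1]
  · apply Complex.ext <;> simp [reV, hj, hx.2 j hj, hy.2 j hj]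

lemma reV_apply_zero_re (z : Fin (n+1) → ℂ) : (reV n z 0).re = (z 0).re := by
  simp [reV]

lemma continuous_reV : Continuous (reV n) :=
  continuous_pi fun j => by unfold reV; split_ifs <;> fun_prop

lemma memXi_iff (z : Fin (n+1) → ℂ) : memXi n z ↔ memVplus n (reV n z) ∧ dotC n z z = 1 := by
  constructor
  · rintro ⟨⟨x, y, hx, hy, rfl⟩, hzz⟩
    rw [reV_add_I_smul hx.1 hy]
    exact ⟨hx, hzz⟩
  · rintro ⟨hx, hzz⟩
    exact ⟨⟨_, _, hx, memV_imV z, (reV_add_I_smul_imV z).symm⟩, hzz⟩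

lemma closure_memXi_subset :
    closure {z | memXi n z} ⊆
      {z | dotC n z z = 1 ∧ 0 ≤ (z 0).re ∧ 0 ≤ (dotC n (reV n z) (reV n z)).re} := by
  have hdot : Continuous fun z : Fin (n+1) → ℂ => dotC n z z :=
    continuous_id.dotProduct continuous_id
  refine closure_minimal (fun z hz => ?_) <| (isClosed_eq hdot continuous_const).inter <|
    (isClosed_le continuous_const (continuous_re.comp (continuous_apply 0))).inter
      (isClosed_le continuous_const (continuous_re.comp (hdot.comp continuous_reV)))
  obtain ⟨⟨-, hx0, hxx⟩, hzz⟩ := (memXi_iff z).1 hz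
  exact ⟨hzz, reV_apply_zero_re z ▸ hx0.le, hxx.le⟩

lemma exists_lightlike_of_mem_closure_diff {z : Fin (n+1) → ℂ}
    (hcl : z ∈ closure {z | memXi n z}) (hz : ¬ memXi n z) :
    ∃ u v : Fin (n+1) → ℂ, memV n u ∧ memV n v ∧ z = u + I • v ∧
      dotC n u u = 0 ∧ 0 ≤ (u 0).re ∧ dotC n v v = -1 ∧ dotC n u v = 0 := by
  obtain ⟨hzz, hz0, hxx⟩ := closure_memXi_subset hcl
  set x := reV n z
  set y := imV n z
  have hx : memV n x := memV_reV z
  have hy : memV n y := memV_imV z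
  have hsphere : dotC n x x - dotC n y y + 2 * I * dotC n x y = 1 := by
    simp only [dotC_eq_dotProduct] at hzz ⊢
    rw [← add_I_smul_dotProduct_self, reV_add_I_smul_imV, hzz]
  have hre : (dotC n x x).re - (dotC n y y).re = 1 := by
    simpa [hx.im_dotC hy] using congrArg re hsphere
  have him : (dotC n x y).re = 0 := by
    simpa [hx.im_dotC hx, hy.im_dotC hy] using congrArg im hsphere
  have hlight : (dotC n x x).re = 0 := by
    by_contra hne
    have hpos : 0 < (dotC n x x).re := lt_of_le_of_ne hxx (Ne.symm hne)
    have hx0 : 0 < (x 0).re := lt_of_le_of_ne (reV_apply_zero_re z ▸ hz0) fun h => by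
      nlinarith [hx.re_dotC_self_le]
    exact hz ((memXi_iff z).2 ⟨⟨hx, hx0, hpos⟩, hzz⟩)
  refine ⟨x, y, hx, hy, (reV_add_I_smul_imV z).symm, Complex.ext hlight (hx.im_dotC hx),
    reV_apply_zero_re z ▸ hz0, Complex.ext (by rw [neg_re, one_re]; linarith)
    (by simp [hy.im_dotC hy]), Complex.ext him (hx.im_dotC hy)⟩

lemma not_memXi_add_I_smul {u v : Fin (n+1) → ℂ} (hu : memV n u) (hv : memV n v)
    (huu : dotC n u u = 0) : ¬ memXi n (u + I • v) := by
  intro h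
  have hpos := ((memXi_iff _).1 h).1.2.2
  rw [reV_add_I_smul hu hv, huu, zero_re] at hpos
  exact lt_irrefl 0 hpos

lemma memXi_add_I_smul_sqrt {x v : Fin (n+1) → ℂ} (hx : memV n x) (hv : memV n v)
    (hx0 : 0 < (x 0).re) {s : ℝ} (hxx : dotC n x x = s) (hs0 : 0 < s) (hs1 : s ≤ 1)
    (hvv : dotC n v v = -1) (hxv : dotC n x v = 0) :
    memXi n (x + I • ((√(1 - s) : ℂ) • v)) := by
  refine ⟨⟨_, _, ⟨hx, hx0, by rwa [hxx, ofReal_re]⟩, hv.ofReal_smul _, rfl⟩, ?_⟩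
  have hsqrt : (√(1 - s) : ℂ) ^ 2 = 1 - s := by
    norm_cast
    exact Real.sq_sqrt (by linarith)
  simp only [dotC_eq_dotProduct] at hxx hvv hxv ⊢
  rw [add_I_smul_dotProduct_self, hxx]
  simp only [dotProduct_smul, smul_dotProduct, smul_eq_mul, hvv, hxv]
  linear_combination hsqrt

lemma add_I_smul_mem_closure_memXi {u v : Fin (n+1) → ℂ} (hu : memV n u) (hv : memV n v)
    (huu : dotC n u u = 0) (hu0 : 0 ≤ (u 0).re) (hvv : dotC n v v = -1)
    (huv : dotC n u v = 0) : u + I • v ∈ closure {z | memXi n z} := by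
  set a := (u 0).re
  set b := (v 0).re
  set w : Fin (n+1) → ℂ := Pi.single 0 1 + (b : ℂ) • v
  have hw : memV n w := memV_single_zero_one.add (hv.ofReal_smul b)
  have hua : u 0 = a := hu.coord_zero
  have hvb : v 0 = b := hv.coord_zero
  have hw0 : w 0 = ((1 + b ^ 2 : ℝ) : ℂ) := by simp [w, hvb, sq]
  simp only [dotC_eq_dotProduct] at huu hvv huv
  have hww : w ⬝ᵥ w = 1 + (b : ℂ) ^ 2 := by
    simp [w, add_dotProduct, dotProduct_add, hvv, hvb, sq]
  have huw : u ⬝ᵥ w = a := by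
    simp only [w, dotProduct_add, dotProduct_smul, dotProduct_single, smul_eq_mul, huv, hua]
    ring
  have hwv : w ⬝ᵥ v = 0 := by
    simp only [w, add_dotProduct, smul_dotProduct, single_dotProduct, smul_eq_mul, hvv, hvb]
    ring
  set q : ℝ → ℝ := fun t => 2 * t * a + t ^ 2 * (1 + b ^ 2)
  have hxx (t : ℝ) : dotC n (u + (t : ℂ) • w) (u + (t : ℂ) • w) = q t := by
    simp only [dotC_eq_dotProduct, add_dotProduct, dotProduct_add, smul_dotProduct,
      dotProduct_smul, smul_eq_mul, dotProduct_comm w u, huu, huw, hww, q]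
    push_cast
    ring
  have hxv (t : ℝ) : dotC n (u + (t : ℂ) • w) v = 0 := by
    simp only [dotC_eq_dotProduct, add_dotProduct, smul_dotProduct, smul_eq_mul, huv, hwv]
    ring
  set γ : ℝ → (Fin (n+1) → ℂ) := fun t => (u + (t : ℂ) • w) + I • ((√(1 - q t) : ℂ) • v)
  have hγ0 : γ 0 = u + I • v := by simp [γ, q]
  have hq1 : ∀ᶠ t in 𝓝[>] (0 : ℝ), q t < 1 :=
    nhdsWithin_le_nhds <|
      ((by fun_prop : Continuous q).tendsto' 0 0 (by simp [q])).eventually_lt_const zero_lt_one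
  refine mem_closure_of_tendsto (((by fun_prop : Continuous γ).tendsto' 0 _ hγ0).mono_left
    (nhdsWithin_le_nhds (s := Set.Ioi 0))) ?_
  filter_upwards [self_mem_nhdsWithin, hq1] with t (ht : 0 < t) hqt
  refine memXi_add_I_smul_sqrt (hu.add (hw.ofReal_smul t)) hv ?_ (hxx t) ?_ hqt.le hvv (hxv t)
  · simp only [Pi.add_apply, Pi.smul_apply, smul_eq_mul, hua, hw0, ← ofReal_mul, ← ofReal_add,
      ofReal_re]
    positivity
  · positivity

end

theorem stmt_6_general (n : ℕ) :
    closure {z : Fin (n+1) → ℂ | memXi n z} \ {z : Fin (n+1) → ℂ | memXi n z}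
      = {z : Fin (n+1) → ℂ | ∃ u v : Fin (n+1) → ℂ, memV n u ∧ memV n v ∧
          z = u + Complex.I • v ∧
          dotC n u u = 0 ∧ 0 ≤ (u 0).re ∧ dotC n v v = -1 ∧ dotC n u v = 0} := by
  ext z
  constructor
  · rintro ⟨hcl, hz⟩
    exact exists_lightlike_of_mem_closure_diff hcl hz
  · rintro ⟨u, v, hu, hv, rfl, huu, hu0, hvv, huv⟩
    exact ⟨add_I_smul_mem_closure_memXi hu hv huu hu0 hvv huv, not_memXi_add_I_smul hu hv huu⟩

/-- Lemma 3.6 (lem:3.1): the boundary of Ξ in S^n_ℂ is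
{u + iv : [u,u]_V = 0, u₀ ≥ 0, [v,v]_V = −1, [u,v]_V = 0}. -/
theorem stmt_6 (n : ℕ) (hn : 1 ≤ n) :
    closure {z : Fin (n+1) → ℂ | memXi n z} \ {z : Fin (n+1) → ℂ | memXi n z}
      = {z : Fin (n+1) → ℂ | ∃ u v : Fin (n+1) → ℂ, memV n u ∧ memV n v ∧
          z = u + Complex.I • v ∧
          dotC n u u = 0 ∧ 0 ≤ (u 0).re ∧ dotC n v v = -1 ∧ dotC n u v = 0} :=
  stmt_6_general n

end
end

section
/- Let n ≥ 2 and Ξ = T_{V₊} ∩ S^n_ℂ. Then Ξ = { g·( cos(r) e_n + (sin(r)/r) v ) : g ∈ G^c, v ∈ V with last coordinate v_n = 0, v₀ > 0, [v,v]_V > 0, and r := √([v,v]_V) ∈ (0, π) }. In other words, Ξ is the G^c-orbit of the exponential image Exp_{e_n}(Ω^π_{e_n}) of the truncated forward light cone in the tangent space at the de Sitter point e_n. (Paper: Theorem 3.8, thm:3.9.) -/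
open MeasureTheory

noncomputable section

/-!
A point `x + iy` of `Ξ` has `x ∈ V₊`, `y ∈ V`, `[x,x] - [y,y] = 1` and `[x,y] = 0`; orthogonality to
the timelike `x` makes `y` spacelike or zero (reverse Cauchy–Schwarz), so `x = sin r · x̂` and
`y = cos r · u` with `x̂ ∈ Hⁿ`, `u` a unit spacelike vector orthogonal to `x̂`, and `r ∈ (0, π/2]`.
Reflections along spacelike vectors of `V` lie in `G^c`; two of them carry the frame `(e₀, -ieₙ)` to
`(x̂, u)`, hence `Exp_{eₙ}(r e₀) = cos r · eₙ + sin r · e₀` to `x + iy`. Conversely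
`Exp_{eₙ}(v) = (sin r / r) v + i (cos r · (-ieₙ))` lies in `Ξ`, and `Ξ` is `G^c`-invariant.
-/

namespace Crown

variable {n : ℕ}

lemma dotC_eq_dotProduct (z w : Fin (n+1) → ℂ) : dotC n z w = z ⬝ᵥ w := rfl

lemma stdC_eq_single (k : Fin (n+1)) : stdC n k = Pi.single k 1 := by
  ext j
  simp [stdC, Pi.single_apply]

lemma dotC_stdC (z : Fin (n+1) → ℂ) (k : Fin (n+1)) : dotC n z (stdC n k) = z k := by
  simp [dotC_eq_dotProduct, stdC_eq_single, dotProduct_single]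

lemma dotC_comm (z w : Fin (n+1) → ℂ) : dotC n z w = dotC n w z := dotProduct_comm z w

lemma dotC_ofReal_smul (a b : ℝ) (z w : Fin (n+1) → ℂ) :
    dotC n ((a : ℂ) • z) ((b : ℂ) • w) = ((a * b : ℝ) : ℂ) * dotC n z w := by
  simp only [dotC_eq_dotProduct, smul_dotProduct, dotProduct_smul, smul_eq_mul]
  push_cast
  ring

def realFormV (n : ℕ) : Submodule ℝ (Fin (n+1) → ℂ) where
  carrier := {z | memV n z}
  add_mem' {z w} hz hw := ⟨by simp [hz.1, hw.1], fun j hj => by simp [hz.2 j hj, hw.2 j hj]⟩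
  zero_mem' := ⟨by simp, fun j _ => by simp⟩
  smul_mem' c z hz := ⟨by simp [hz.1], fun j hj => by simp [hz.2 j hj]⟩

lemma memV_ofReal_smul (c : ℝ) {z : Fin (n+1) → ℂ} (hz : memV n z) : memV n ((c : ℂ) • z) := by
  rw [Complex.coe_smul]
  exact (realFormV n).smul_mem c hz

lemma memV_sub {z w : Fin (n+1) → ℂ} (hz : memV n z) (hw : memV n w) : memV n (z - w) :=
  (realFormV n).sub_mem hz hw

lemma memV_add {z w : Fin (n+1) → ℂ} (hz : memV n z) (hw : memV n w) : memV n (z + w) :=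
  (realFormV n).add_mem hz hw

lemma memV_stdC_zero : memV n (stdC n 0) :=
  ⟨by simp [stdC], fun j hj => by simp [stdC, hj]⟩

lemma dotC_re_of_memV {z w : Fin (n+1) → ℂ} (hz : memV n z) (hw : memV n w) :
    (dotC n z w).re = (z 0).re * (w 0).re - ∑ j : Fin n, (z j.succ).im * (w j.succ).im := by
  have hz' (j : Fin n) : (z j.succ).re = 0 := hz.2 _ j.succ_ne_zero
  have hw' (j : Fin n) : (w j.succ).re = 0 := hw.2 _ j.succ_ne_zero
  simp [dotC, Complex.re_sum, Fin.sum_univ_succ, hz.1, hw', sub_eq_add_neg]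

lemma dotC_im_of_memV {z w : Fin (n+1) → ℂ} (hz : memV n z) (hw : memV n w) :
    (dotC n z w).im = 0 := by
  have hz' (j : Fin n) : (z j.succ).re = 0 := hz.2 _ j.succ_ne_zero
  have hw' (j : Fin n) : (w j.succ).re = 0 := hw.2 _ j.succ_ne_zero
  simp [dotC, Complex.im_sum, Fin.sum_univ_succ, hz.1, hw.1, hz', hw']

lemma ofReal_dotC_re {z w : Fin (n+1) → ℂ} (hz : memV n z) (hw : memV n w) :
    ((dotC n z w).re : ℂ) = dotC n z w :=
  Complex.ext rfl (by simp [dotC_im_of_memV hz hw])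

lemma eq_zero_of_memV {w : Fin (n+1) → ℂ} (hw : memV n w) (h0 : (w 0).re = 0)
    (hs : ∀ j : Fin n, (w j.succ).im = 0) : w = 0 := by
  funext j
  refine Fin.cases (Complex.ext h0 hw.1) (fun k => Complex.ext ?_ (hs k)) j
  exact hw.2 _ (Fin.succ_ne_zero k)

lemma sq_lt_of_orthogonal {p q : ℝ} {f h : Fin n → ℝ} (hpf : ∑ j, f j * f j < p * p)
    (horth : p * q - ∑ j, f j * h j = 0) (hh : 0 < ∑ j, h j * h j) :
    q * q < ∑ j, h j * h j := by
  have hcs := Finset.sum_mul_sq_le_sq_mul_sq Finset.univ f h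
  simp only [sq] at hcs
  rw [show ∑ j, f j * h j = p * q by linarith] at hcs
  have hp : 0 < p * p := (Finset.sum_nonneg fun j _ => mul_self_nonneg (f j)).trans_lt hpf
  nlinarith

lemma pos_of_timelike_of_lorentz_pos {p q : ℝ} {f h : Fin n → ℝ} (hp : 0 < p)
    (hpf : ∑ j, f j * f j < p * p) (hqh : ∑ j, h j * h j < q * q)
    (hpq : 0 < p * q - ∑ j, f j * h j) : 0 < q := by
  by_contra! hq
  have hcs := Finset.sum_mul_sq_le_sq_mul_sq Finset.univ f h
  simp only [sq] at hcs
  have hF := Finset.sum_nonneg fun j (_ : j ∈ Finset.univ) => mul_self_nonneg (f j)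
  have hH := Finset.sum_nonneg fun j (_ : j ∈ Finset.univ) => mul_self_nonneg (h j)
  have hq' : q < 0 := by nlinarith
  have hpq' : p * q < 0 := mul_neg_of_pos_of_neg hp hq'
  nlinarith [mul_lt_mul'' hpf hqh hF hH]

lemma dotC_self_re_neg_of_orthogonal {x w : Fin (n+1) → ℂ} (hx : memV n x)
    (hxx : 0 < (dotC n x x).re) (hw : memV n w) (hxw : dotC n x w = 0) (hw0 : w ≠ 0) :
    (dotC n w w).re < 0 := by
  rw [dotC_re_of_memV hx hx] at hxx
  have horth := congrArg Complex.re hxw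
  rw [dotC_re_of_memV hx hw, Complex.zero_re] at horth
  rw [dotC_re_of_memV hw hw, sub_neg]
  have hh : 0 < ∑ j : Fin n, (w j.succ).im * (w j.succ).im := by
    refine (Finset.sum_nonneg fun j _ => mul_self_nonneg _).lt_of_ne fun hzero => hw0 ?_
    have hs : ∀ j : Fin n, (w j.succ).im = 0 := fun j => mul_self_eq_zero.mp
      ((Finset.sum_eq_zero_iff_of_nonneg fun j _ => mul_self_nonneg _).mp hzero.symm j
        (Finset.mem_univ j))
    have hp : (x 0).re ≠ 0 := by
      rintro hp
      have := Finset.sum_nonneg fun (j : Fin n) (_ : j ∈ Finset.univ) =>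
        mul_self_nonneg (x j.succ).im
      simp only [hp, mul_zero] at hxx
      linarith
    refine eq_zero_of_memV hw ?_ hs
    simpa [hs, hp] using horth
  exact sq_lt_of_orthogonal (by linarith) horth hh

lemma dotC_self_re_nonpos_of_orthogonal {x w : Fin (n+1) → ℂ} (hx : memV n x)
    (hxx : 0 < (dotC n x x).re) (hw : memV n w) (hxw : dotC n x w = 0) :
    (dotC n w w).re ≤ 0 := by
  rcases eq_or_ne w 0 with rfl | hw0
  · simp [dotC]
  · exact (dotC_self_re_neg_of_orthogonal hx hxx hw hxw hw0).le

lemma re_zero_pos_of_dotC_re_pos {u w : Fin (n+1) → ℂ} (hu : memV n u) (hu0 : 0 < (u 0).re)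
    (huu : 0 < (dotC n u u).re) (hw : memV n w) (hww : 0 < (dotC n w w).re)
    (huw : 0 < (dotC n u w).re) : 0 < (w 0).re := by
  rw [dotC_re_of_memV hu hu, sub_pos] at huu
  rw [dotC_re_of_memV hw hw, sub_pos] at hww
  rw [dotC_re_of_memV hu hw] at huw
  exact pos_of_timelike_of_lorentz_pos hu0 huu hww huw

lemma memVplus_stdC_zero : memVplus n (stdC n 0) :=
  ⟨memV_stdC_zero, by simp [stdC], by simp [dotC_stdC, stdC]⟩

lemma isGc.memVplus_apply {g : (Fin (n+1) → ℂ) →ₗ[ℂ] (Fin (n+1) → ℂ)} (hg : isGc n g)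
    {z : Fin (n+1) → ℂ} (hz : memVplus n z) : memVplus n (g z) := by
  obtain ⟨-, hdot, hV, hpos⟩ := hg
  have hgz : 0 < (dotC n (g z) (g z)).re := by rw [hdot]; exact hz.2.2
  refine ⟨hV _ hz.1, re_zero_pos_of_dotC_re_pos (hV _ memV_stdC_zero) hpos ?_ (hV _ hz.1) hgz ?_,
    hgz⟩
  · rw [hdot]; exact memVplus_stdC_zero.2.2
  · rw [hdot, dotC_comm, dotC_stdC]; exact hz.2.1

lemma isGc.comp {g₁ g₂ : (Fin (n+1) → ℂ) →ₗ[ℂ] (Fin (n+1) → ℂ)} (h₁ : isGc n g₁)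
    (h₂ : isGc n g₂) : isGc n (g₁ ∘ₗ g₂) :=
  ⟨h₁.1.comp h₂.1, fun z w => by simp [h₁.2.1, h₂.2.1],
    fun z hz => h₁.2.2.1 _ (h₂.2.2.1 _ hz),
    (isGc.memVplus_apply h₁ (isGc.memVplus_apply h₂ memVplus_stdC_zero)).2.1⟩

lemma isGc.memXi_apply {g : (Fin (n+1) → ℂ) →ₗ[ℂ] (Fin (n+1) → ℂ)} (hg : isGc n g)
    {z : Fin (n+1) → ℂ} (hz : memXi n z) : memXi n (g z) := by
  obtain ⟨⟨x, y, hx, hy, rfl⟩, hzz⟩ := hz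
  exact ⟨⟨g x, g y, isGc.memVplus_apply hg hx, hg.2.2.1 _ hy, by simp⟩, by rw [hg.2.1, hzz]⟩

/-- For `D·D = 0` the junk value `x / 0 = 0` makes this the identity. -/
def reflectAlong (n : ℕ) (D : Fin (n+1) → ℂ) : (Fin (n+1) → ℂ) →ₗ[ℂ] (Fin (n+1) → ℂ) where
  toFun z := z - (2 * dotC n z D / dotC n D D) • D
  map_add' z w := by
    simp only [dotC_eq_dotProduct, add_dotProduct, mul_add, add_div, add_smul]
    abel
  map_smul' c z := by
    simp only [dotC_eq_dotProduct, smul_dotProduct, smul_eq_mul, RingHom.id_apply, smul_sub,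
      smul_smul]
    congr 2
    ring

lemma reflectAlong_apply (D z : Fin (n+1) → ℂ) :
    reflectAlong n D z = z - (2 * dotC n z D / dotC n D D) • D := rfl

lemma reflectAlong_of_orthogonal {D z : Fin (n+1) → ℂ} (h : dotC n z D = 0) :
    reflectAlong n D z = z := by
  simp [reflectAlong_apply, h]

lemma dotC_reflectAlong (D z w : Fin (n+1) → ℂ) :
    dotC n (reflectAlong n D z) (reflectAlong n D w) = dotC n z w := by
  rcases eq_or_ne (dotC n D D) 0 with hD | hD
  · simp [reflectAlong_apply, hD]
  · simp only [reflectAlong_apply, dotC_eq_dotProduct, sub_dotProduct, dotProduct_sub,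
      smul_dotProduct, dotProduct_smul, smul_eq_mul, dotProduct_comm D w] at hD ⊢
    field_simp
    ring

lemma reflectAlong_involutive (D : Fin (n+1) → ℂ) : Function.Involutive (reflectAlong n D) := by
  intro z
  rcases eq_or_ne (dotC n D D) 0 with hD | hD
  · simp [reflectAlong_apply, hD]
  · have h : dotC n (reflectAlong n D z) D = -dotC n z D := by
      simp only [reflectAlong_apply, dotC_eq_dotProduct, sub_dotProduct, smul_dotProduct,
        smul_eq_mul] at hD ⊢
      field_simp
      ring
    rw [reflectAlong_apply _ (reflectAlong n D z), h, reflectAlong_apply, mul_neg, neg_div,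
      neg_smul, sub_neg_eq_add, sub_add_cancel]

lemma reflectAlong_sub_apply {a b : Fin (n+1) → ℂ} (hab : dotC n a a = dotC n b b)
    (hD : dotC n (a - b) (a - b) ≠ 0) : reflectAlong n (a - b) a = b := by
  have hcoef : 2 * dotC n a (a - b) / dotC n (a - b) (a - b) = 1 := by
    rw [div_eq_one_iff_eq hD]
    simp only [dotC_eq_dotProduct, dotProduct_sub, sub_dotProduct, dotProduct_comm b a] at hab ⊢
    linear_combination hab
  rw [reflectAlong_apply, hcoef, one_smul, sub_sub_cancel]

lemma isGc_reflectAlong {D : Fin (n+1) → ℂ} (hD : memV n D) (hDD : (dotC n D D).re ≤ 0) :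
    isGc n (reflectAlong n D) := by
  refine ⟨(reflectAlong_involutive D).bijective, dotC_reflectAlong D, fun z hz => ?_, ?_⟩
  · rw [reflectAlong_apply, ← ofReal_dotC_re hz hD, ← ofReal_dotC_re hD hD]
    exact memV_sub hz
      (by exact_mod_cast memV_ofReal_smul (2 * (dotC n z D).re / (dotC n D D).re) hD)
  · have h0 : (reflectAlong n D (stdC n 0) 0).re
        = 1 - 2 * (D 0).re / (dotC n D D).re * (D 0).re := by
      rw [reflectAlong_apply, dotC_comm, dotC_stdC, ← ofReal_dotC_re hD hD]
      simp [stdC, Complex.mul_re, hD.1]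
    have : 2 * (D 0).re / (dotC n D D).re * (D 0).re ≤ 0 := by
      rw [div_mul_eq_mul_div]
      exact div_nonpos_of_nonneg_of_nonpos (by nlinarith [sq_nonneg (D 0).re]) hDD
    linarith

lemma isGc_reflectAlong_of_orthogonal {t D : Fin (n+1) → ℂ} (ht : memV n t)
    (htt : 0 < (dotC n t t).re) (hD : memV n D) (htD : dotC n t D = 0) :
    isGc n (reflectAlong n D) :=
  isGc_reflectAlong hD (dotC_self_re_nonpos_of_orthogonal ht htt hD htD)

lemma reflectAlong_sub_apply_of_orthogonal {t a b : Fin (n+1) → ℂ} (ht : memV n t)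
    (htt : 0 < (dotC n t t).re) (ha : memV n a) (hb : memV n b) (hab : dotC n a a = dotC n b b)
    (htab : dotC n t (a - b) = 0) : reflectAlong n (a - b) a = b := by
  rcases eq_or_ne (a - b) 0 with h | h
  · rw [h, reflectAlong_apply]
    simpa using (sub_eq_zero.mp h)
  · refine reflectAlong_sub_apply hab fun h0 => ?_
    have := dotC_self_re_neg_of_orthogonal ht htt (memV_sub ha hb) htab h
    simp [h0] at this

lemma zero_ne_last_of_ne_zero (hn : n ≠ 0) : (0 : Fin (n+1)) ≠ Fin.last n :=
  fun h => hn (congrArg Fin.val h).symm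

def spacelikeLast (n : ℕ) : Fin (n+1) → ℂ := -Complex.I • stdC n (Fin.last n)

lemma I_smul_spacelikeLast : Complex.I • spacelikeLast n = stdC n (Fin.last n) := by
  simp [spacelikeLast, smul_smul]

lemma memV_spacelikeLast (hn : n ≠ 0) : memV n (spacelikeLast n) := by
  have h0 := zero_ne_last_of_ne_zero hn
  refine ⟨by simp [spacelikeLast, stdC, h0], fun j _ => ?_⟩
  by_cases hj : j = Fin.last n <;> simp [spacelikeLast, stdC, hj]

lemma dotC_spacelikeLast_self : dotC n (spacelikeLast n) (spacelikeLast n) = -1 := by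
  simp [spacelikeLast, dotC_eq_dotProduct, stdC_eq_single, dotProduct_single]

lemma dotC_stdC_zero_spacelikeLast (hn : n ≠ 0) : dotC n (stdC n 0) (spacelikeLast n) = 0 := by
  have h0 := zero_ne_last_of_ne_zero hn
  rw [dotC_comm, dotC_stdC]
  simp [spacelikeLast, stdC, h0]

lemma exists_isGc_apply_stdC_zero {x : Fin (n+1) → ℂ} (hx : memHn n x) :
    ∃ g, isGc n g ∧ g (stdC n 0) = x := by
  obtain ⟨hxV, hx0, hxx⟩ := hx
  have he := memV_stdC_zero (n := n)
  have hee : dotC n (stdC n 0) (stdC n 0) = 1 := by simp [dotC_stdC, stdC]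
  -- the reflection along `e₀ - x` is time-preserving because `e₀ - x ⊥ e₀ + x`, which is timelike
  have hsum : 0 < (dotC n (stdC n 0 + x) (stdC n 0 + x)).re := by
    simp only [dotC_eq_dotProduct, add_dotProduct, dotProduct_add, dotProduct_comm x] at hxx hee ⊢
    simp only [← dotC_eq_dotProduct, dotC_comm (stdC n 0) x, dotC_stdC, hee, hxx, Complex.add_re,
      Complex.one_re]
    linarith
  have horth : dotC n (stdC n 0 + x) (stdC n 0 - x) = 0 := by
    simp only [dotC_eq_dotProduct, add_dotProduct, dotProduct_sub, dotProduct_comm x] at hxx hee ⊢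
    rw [hee, hxx]
    ring
  exact ⟨_, isGc_reflectAlong_of_orthogonal (memV_add he hxV) hsum (memV_sub he hxV) horth,
    reflectAlong_sub_apply_of_orthogonal (memV_add he hxV) hsum he hxV (by rw [hee, hxx]) horth⟩

lemma exists_isGc_apply_eq_of_orthogonal {x a b : Fin (n+1) → ℂ} (hx : memHn n x)
    (ha : memV n a) (hb : memV n b) (hab : dotC n a a = dotC n b b) (hxa : dotC n x a = 0)
    (hxb : dotC n x b = 0) : ∃ g, isGc n g ∧ g x = x ∧ g a = b := by
  have hxx : 0 < (dotC n x x).re := by simp [hx.2.2]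
  have hxab : dotC n x (a - b) = 0 := by
    rw [dotC_eq_dotProduct, dotProduct_sub, ← dotC_eq_dotProduct, ← dotC_eq_dotProduct, hxa, hxb,
      sub_zero]
  exact ⟨_, isGc_reflectAlong_of_orthogonal hx.1 hxx (memV_sub ha hb) hxab,
    reflectAlong_of_orthogonal hxab, reflectAlong_sub_apply_of_orthogonal hx.1 hxx ha hb hab hxab⟩

lemma exists_isGc_frame (hn : n ≠ 0) {x u : Fin (n+1) → ℂ} (hx : memHn n x) (hu : memV n u)
    (huu : dotC n u u = -1) (hxu : dotC n x u = 0) :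
    ∃ g, isGc n g ∧ g (stdC n 0) = x ∧ g (spacelikeLast n) = u := by
  obtain ⟨g₁, hg₁, hg₁e⟩ := exists_isGc_apply_stdC_zero hx
  have hxf : dotC n x (g₁ (spacelikeLast n)) = 0 := by
    rw [← hg₁e, hg₁.2.1, dotC_stdC_zero_spacelikeLast hn]
  obtain ⟨g₂, hg₂, hg₂x, hg₂f⟩ := exists_isGc_apply_eq_of_orthogonal hx
    (hg₁.2.2.1 _ (memV_spacelikeLast hn)) hu (by rw [hg₁.2.1, dotC_spacelikeLast_self, huu]) hxf hxu
  exact ⟨g₂ ∘ₗ g₁, isGc.comp hg₂ hg₁, by simp [hg₁e, hg₂x], by simp [hg₂f]⟩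

lemma exists_unit_spacelike_smul_eq (hn : n ≠ 0) {x y : Fin (n+1) → ℂ} (hx : memHn n x)
    (hy : memV n y) (hxy : dotC n x y = 0) :
    ∃ u, memV n u ∧ dotC n u u = -1 ∧ dotC n x u = 0 ∧
      y = (√(-(dotC n y y).re) : ℂ) • u := by
  rcases eq_or_ne y 0 with rfl | hy0
  · obtain ⟨g, hg, hge⟩ := exists_isGc_apply_stdC_zero hx
    refine ⟨g (spacelikeLast n), hg.2.2.1 _ (memV_spacelikeLast hn), ?_, ?_, by simp [dotC]⟩
    · rw [hg.2.1, dotC_spacelikeLast_self]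
    · rw [← hge, hg.2.1, dotC_stdC_zero_spacelikeLast hn]
  · have hyy := dotC_self_re_neg_of_orthogonal hx.1 (by simp [hx.2.2]) hy hxy hy0
    set β := √(-(dotC n y y).re)
    have hβ : 0 < β := Real.sqrt_pos.mpr (by linarith)
    have hββ : (β : ℂ) * β = -dotC n y y := by
      rw [← Complex.ofReal_mul, Real.mul_self_sqrt (by linarith), Complex.ofReal_neg,
        ofReal_dotC_re hy hy]
    have hβ0 : (β : ℂ) ≠ 0 := Complex.ofReal_ne_zero.mpr hβ.ne'
    refine ⟨(β⁻¹ : ℂ) • y, by exact_mod_cast memV_ofReal_smul β⁻¹ hy, ?_, ?_, ?_⟩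
    · simp only [dotC_eq_dotProduct, smul_dotProduct, dotProduct_smul, smul_eq_mul] at hββ ⊢
      field_simp
      linear_combination hββ
    · simp only [dotC_eq_dotProduct, dotProduct_smul, smul_eq_mul] at hxy ⊢
      simp [hxy]
    · rw [smul_smul, mul_inv_cancel₀ hβ0, one_smul]

lemma dotC_add_I_smul_self_eq_one_iff {x y : Fin (n+1) → ℂ} (hx : memV n x) (hy : memV n y) :
    dotC n (x + Complex.I • y) (x + Complex.I • y) = 1 ↔
      (dotC n x x).re - (dotC n y y).re = 1 ∧ dotC n x y = 0 := by
  have hexp : dotC n (x + Complex.I • y) (x + Complex.I • y)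
      = ((dotC n x x).re - (dotC n y y).re : ℝ) + 2 * (dotC n x y).re * Complex.I := by
    simp only [dotC_eq_dotProduct, add_dotProduct, dotProduct_add, smul_dotProduct,
      dotProduct_smul, smul_eq_mul, dotProduct_comm y x]
    simp only [← dotC_eq_dotProduct, Complex.ofReal_sub, ofReal_dotC_re hx hx,
      ofReal_dotC_re hy hy, ofReal_dotC_re hx hy]
    linear_combination dotC n y y * Complex.I_mul_I
  rw [hexp, Complex.ext_iff, ← ofReal_dotC_re hx hy]
  simp

/-- The exponential map `Exp_{eₙ}` of `S^n_ℂ` at `eₙ`. -/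
def expAtLast (n : ℕ) (v : Fin (n+1) → ℂ) : Fin (n+1) → ℂ :=
  ((Real.cos (Real.sqrt ((dotC n v v).re)) : ℝ) : ℂ) • stdC n (Fin.last n)
    + ((Real.sin (Real.sqrt ((dotC n v v).re)) / Real.sqrt ((dotC n v v).re) : ℝ) : ℂ) • v

/-- The truncated forward light cone `Ω^π_{eₙ}` in the tangent space `eₙ^⊥ ∩ V` at `eₙ`. -/
def memOmega (n : ℕ) (v : Fin (n+1) → ℂ) : Prop :=
  memV n v ∧ v (Fin.last n) = 0 ∧ 0 < (v 0).re ∧ 0 < (dotC n v v).re ∧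
    Real.sqrt ((dotC n v v).re) < Real.pi

lemma memXi_expAtLast {v : Fin (n+1) → ℂ} (hv : memOmega n v) : memXi n (expAtLast n v) := by
  obtain ⟨hvV, hvl, hv0, hvv, hvπ⟩ := hv
  have hn : n ≠ 0 := by
    rintro rfl
    exact hv0.ne' (by simpa using congrArg Complex.re hvl)
  set r := √(dotC n v v).re
  have hr : 0 < r := Real.sqrt_pos.mpr hvv
  have hrr : (dotC n v v).re = r * r := (Real.mul_self_sqrt hvv.le).symm
  have hsin : 0 < Real.sin r := Real.sin_pos_of_pos_of_lt_pi hr hvπ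
  set x := ((Real.sin r / r : ℝ) : ℂ) • v
  set y := ((Real.cos r : ℝ) : ℂ) • spacelikeLast n
  have hxV : memV n x := memV_ofReal_smul _ hvV
  have hyV : memV n y := memV_ofReal_smul _ (memV_spacelikeLast hn)
  have hxx : (dotC n x x).re = Real.sin r * Real.sin r := by
    rw [dotC_ofReal_smul, ← ofReal_dotC_re hvV hvV, ← Complex.ofReal_mul, Complex.ofReal_re, hrr]
    field_simp
  have hyy : (dotC n y y).re = -(Real.cos r * Real.cos r) := by
    rw [dotC_ofReal_smul, dotC_spacelikeLast_self, mul_neg_one, Complex.neg_re,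
      Complex.ofReal_re]
  have hxy : dotC n x y = 0 := by
    rw [dotC_ofReal_smul, spacelikeLast, dotC_eq_dotProduct, dotProduct_smul,
      ← dotC_eq_dotProduct, dotC_stdC, hvl]
    simp
  have hexp : expAtLast n v = x + Complex.I • y := by
    simp only [expAtLast, x, y]
    rw [smul_comm Complex.I, I_smul_spacelikeLast]
    exact add_comm _ _
  refine ⟨⟨x, y, ⟨hxV, ?_, by rw [hxx]; positivity⟩, hyV, hexp⟩, ?_⟩
  · exact (Complex.re_ofReal_mul _ _).trans_gt (mul_pos (div_pos hsin hr) hv0)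
  · rw [hexp, dotC_add_I_smul_self_eq_one_iff hxV hyV, hxx, hyy]
    exact ⟨by nlinarith [Real.sin_sq_add_cos_sq r], hxy⟩

lemma exists_isGc_eq_cos_smul_add_sin_smul (hn : n ≠ 0) {z : Fin (n+1) → ℂ} (hz : memXi n z) :
    ∃ g r, isGc n g ∧ 0 < r ∧ r < Real.pi ∧
      z = g ((Real.cos r : ℂ) • stdC n (Fin.last n) + (Real.sin r : ℂ) • stdC n 0) := by
  obtain ⟨⟨x, y, hx, hy, rfl⟩, hzz⟩ := hz
  obtain ⟨hxy1, hxy⟩ := (dotC_add_I_smul_self_eq_one_iff hx.1 hy).mp hzz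
  have hyy := dotC_self_re_nonpos_of_orthogonal hx.1 hx.2.2 hy hxy
  set s := √(dotC n x x).re
  have hs : 0 < s := Real.sqrt_pos.mpr hx.2.2
  have hss : ((s * s : ℝ) : ℂ) = dotC n x x := by
    rw [Real.mul_self_sqrt hx.2.2.le, ofReal_dotC_re hx.1 hx.1]
  set xh := ((s⁻¹ : ℝ) : ℂ) • x
  have hxh : memHn n xh := by
    refine ⟨memV_ofReal_smul _ hx.1,
      (Complex.re_ofReal_mul _ _).trans_gt (mul_pos (inv_pos.mpr hs) hx.2.1), ?_⟩
    rw [dotC_ofReal_smul, ← hss, ← Complex.ofReal_mul, ← Complex.ofReal_one]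
    congr 1
    field_simp
  have hxhy : dotC n xh y = 0 := by
    rw [dotC_eq_dotProduct, smul_dotProduct, ← dotC_eq_dotProduct, hxy, smul_zero]
  obtain ⟨u, hu, huu, hxhu, hyu⟩ := exists_unit_spacelike_smul_eq hn hxh hy hxhy
  obtain ⟨g, hg, hge, hgf⟩ := exists_isGc_frame hn hxh hu huu hxhu
  set β := √(-(dotC n y y).re)
  have hβ : 0 ≤ β := Real.sqrt_nonneg _
  have hββ : β * β = 1 - s * s := by
    rw [Real.mul_self_sqrt (by linarith), Real.mul_self_sqrt hx.2.2.le]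
    linarith
  have hβ1 : β < 1 := by nlinarith
  set r := Real.arccos β
  have hcos : Real.cos r = β := Real.cos_arccos (by linarith) hβ1.le
  have hsin : Real.sin r = s := by
    rw [Real.sin_arccos, sq, hββ, sub_sub_cancel, Real.sqrt_mul_self hs.le]
  refine ⟨g, r, hg, Real.arccos_pos.mpr hβ1, Real.arccos_lt_pi.mpr (by linarith), ?_⟩
  rw [map_add, map_smul, map_smul, ← I_smul_spacelikeLast, map_smul, hge, hgf, hcos, hsin, hyu,
    smul_comm (β : ℂ) Complex.I u, smul_smul (s : ℂ), ← Complex.ofReal_mul, mul_inv_cancel₀ hs.ne',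
    Complex.ofReal_one, one_smul]
  exact add_comm _ _

lemma dotC_ofReal_smul_stdC_zero_self (r : ℝ) :
    dotC n ((r : ℂ) • stdC n 0) ((r : ℂ) • stdC n 0) = ((r * r : ℝ) : ℂ) := by
  rw [dotC_ofReal_smul, dotC_stdC]
  simp [stdC]

lemma memOmega_ofReal_smul_stdC_zero (hn : n ≠ 0) {r : ℝ} (hr : 0 < r) (hrπ : r < Real.pi) :
    memOmega n ((r : ℂ) • stdC n 0) := by
  refine ⟨memV_ofReal_smul r memV_stdC_zero, by simp [stdC, (zero_ne_last_of_ne_zero hn).symm],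
    by simpa [stdC] using hr, ?_, ?_⟩ <;>
    rw [dotC_ofReal_smul_stdC_zero_self, Complex.ofReal_re]
  · positivity
  · rwa [Real.sqrt_mul_self hr.le]

lemma expAtLast_ofReal_smul_stdC_zero {r : ℝ} (hr : 0 < r) :
    expAtLast n ((r : ℂ) • stdC n 0)
      = (Real.cos r : ℂ) • stdC n (Fin.last n) + (Real.sin r : ℂ) • stdC n 0 := by
  rw [expAtLast, dotC_ofReal_smul_stdC_zero_self, Complex.ofReal_re, Real.sqrt_mul_self hr.le,
    smul_smul, ← Complex.ofReal_mul, div_mul_cancel₀ _ hr.ne']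

lemma exists_isGc_memOmega_of_memXi (hn : n ≠ 0) {z : Fin (n+1) → ℂ} (hz : memXi n z) :
    ∃ g v, isGc n g ∧ memOmega n v ∧ z = g (expAtLast n v) := by
  obtain ⟨g, r, hg, hr, hrπ, rfl⟩ := exists_isGc_eq_cos_smul_add_sin_smul hn hz
  exact ⟨g, _, hg, memOmega_ofReal_smul_stdC_zero hn hr hrπ,
    by rw [expAtLast_ofReal_smul_stdC_zero hr]⟩

end Crown

/-- Theorem 3.8 (thm:3.9): Ξ = G^c·Exp_{e_n}(Ω^π_{e_n}), i.e. Ξ is the set of all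
g·(cos(r)e_n + (sin(r)/r)v) with v ∈ V, v_n = 0, v₀ > 0, [v,v]_V > 0, r = √[v,v]_V ∈ (0,π). -/
theorem stmt_8 (n : ℕ) (hn : 2 ≤ n) :
    {z : Fin (n+1) → ℂ | memXi n z} =
      {z : Fin (n+1) → ℂ | ∃ (g : (Fin (n+1) → ℂ) →ₗ[ℂ] (Fin (n+1) → ℂ))
          (v : Fin (n+1) → ℂ),
        isGc n g ∧ memV n v ∧ v (Fin.last n) = 0 ∧ 0 < (v 0).re ∧ 0 < (dotC n v v).re ∧
        0 < Real.sqrt ((dotC n v v).re) ∧ Real.sqrt ((dotC n v v).re) < Real.pi ∧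
        z = g (((Real.cos (Real.sqrt ((dotC n v v).re)) : ℝ) : ℂ) • stdC n (Fin.last n)
              + ((Real.sin (Real.sqrt ((dotC n v v).re)) / Real.sqrt ((dotC n v v).re) : ℝ) : ℂ) • v)} := by
  ext z
  constructor
  · intro hz
    obtain ⟨g, v, hg, ⟨hv, hvl, hv0, hvv, hvπ⟩, rfl⟩ :=
      Crown.exists_isGc_memOmega_of_memXi (by omega) hz
    exact ⟨g, v, hg, hv, hvl, hv0, hvv, Real.sqrt_pos.mpr hvv, hvπ, rfl⟩
  · rintro ⟨g, v, hg, hv, hvl, hv0, hvv, -, hvπ, rfl⟩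
    exact Crown.isGc.memXi_apply hg (Crown.memXi_expAtLast ⟨hv, hvl, hv0, hvv, hvπ⟩)
end
end
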